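/- arXiv:0710.1386 — 4 statements merged into one kernel-verified Lean document; each statement's English description precedes it below -/
import Mathlib

section
/- In the proof of the symmetry criterion: let H be a numerical semigroup with multiplicity a ≥ 3 and let α ≥ a − 1 be an integer such that for all 0 ≤ n ≤ α, n ∈ H ⟺ α − n ∉ H. Then α + n ∈ H for all integers n with 1 ≤ n ≤ a − 1. -/
/-- In the proof of the symmetry criterion: `α + n ∈ H` for `1 ≤ n ≤ a - 1`. -/
theorem stmt1 (H : AddSubmonoid ℕ) (hfin : (Set.univ \ (H : Set ℕ)).Finite)
    (a : ℕ) (haH : a ∈ H) (ha0 : a ≠ 0) (hamin : ∀ n ∈ H, n ≠ 0 → a ≤ n) (ha3 : 3 ≤ a)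
    (α : ℕ) (hα : a - 1 ≤ α)
    (hsym : ∀ n : ℕ, n ≤ α → (n ∈ H ↔ (α - n) ∉ H)) :
    ∀ n : ℕ, 1 ≤ n → n ≤ a - 1 → α + n ∈ H := by
  intro n hn1 hn2
  set k := a - n with hk
  have hkH : k ∉ H := fun h => by have := hamin k h (by omega); omega
  have hm : α - k ∈ H := by
    rw [hsym (α - k) (by omega)]
    have h2 : α - (α - k) = k := by omega
    rw [h2]; exact hkH
  have hs : (α - k) + a ∈ H := H.add_mem hm haH
  have heq : (α - k) + a = α + n := by omega
  rwa [heq] at hs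
end

section
/- Let H = ⟨a, a+1⟩ with a ≥ 2, let k be a field, A = k[[t^a, t^{a+1}]] ⊆ k[[t]], and 𝔪 = (t^a, t^{a+1}) the maximal ideal of A. Then for every integer ℓ ≥ 0, the ideal 𝔪^ℓ is generated by the monomials t^{aℓ+i} for 0 ≤ i ≤ ℓ, and equals the ideal generated by all t^n with n ∈ H and n ≥ aℓ. -/
set_option maxHeartbeats 1000000
set_option synthInstance.maxHeartbeats 1000000

open PowerSeries

/-- The numerical semigroup ring `k[[H]]`: power series supported on `H`. -/
noncomputable def ssr (k : Type) [Field k] (H : AddSubmonoid ℕ) :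
    Subalgebra k (PowerSeries k) where
  carrier := {f | ∀ n : ℕ, n ∉ H → PowerSeries.coeff n f = 0}
  mul_mem' := by
    intro f g hf hg n hn
    rw [Set.mem_setOf_eq] at hf hg
    rw [PowerSeries.coeff_mul]
    apply Finset.sum_eq_zero
    rintro ⟨i, j⟩ hij
    replace hij : i + j = n := by simpa using hij
    by_cases hi : i ∈ H
    · have hj : j ∉ H := fun hj => hn (hij ▸ H.add_mem hi hj)
      rw [hg j hj, mul_zero]
    · rw [hf i hi, zero_mul]
  add_mem' := by
    intro f g hf hg n hn
    rw [Set.mem_setOf_eq] at hf hg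
    rw [map_add, hf n hn, hg n hn, add_zero]
  one_mem' := by
    intro n hn
    have h0 : n ≠ 0 := fun h => hn (by rw [h]; exact H.zero_mem)
    simp [PowerSeries.coeff_one, h0]
  zero_mem' := by
    intro n _
    simp
  algebraMap_mem' := by
    intro r n hn
    have h0 : n ≠ 0 := fun h => hn (by rw [h]; exact H.zero_mem)
    simp [PowerSeries.algebraMap_apply, PowerSeries.coeff_C, h0]

/-- The monomial `t^n` as an element of `k[[H]]`, for `n ∈ H`. -/
noncomputable def tp (k : Type) [Field k] (H : AddSubmonoid ℕ) (n : ℕ) (hn : n ∈ H) :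
    ssr k H :=
  ⟨PowerSeries.X ^ n, by
    intro m hm
    rw [PowerSeries.coeff_X_pow]
    exact if_neg (fun h => hm (by rw [h]; exact hn))⟩

/-- The maximal ideal of `k[[H]]`, generated by the monomials `t^n`, `0 < n ∈ H`. -/
noncomputable def mIdeal (k : Type) [Field k] (H : AddSubmonoid ℕ) : Ideal (ssr k H) :=
  Ideal.span {x | ∃ n : ℕ, ∃ hn : n ∈ H, 0 < n ∧ x = tp k H n hn}

/-!
Monomial ideals of `k[[H]]` multiply by adding their exponent sets, so `(t^a, t^{a+1})^ℓ` is
generated by the monomials with exponents in `ℓ • {a, a + 1} = [aℓ, aℓ + ℓ]`. The elements of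
`⟨a, a + 1⟩` are exactly the numbers `a q + r` with `r ≤ q`, and every such number `n ≥ aℓ` is
an element of `[aℓ, aℓ + ℓ]` plus an element of `⟨a, a + 1⟩`.
-/

open scoped Pointwise

section MonomialIdeal

variable {k : Type} [Field k] {H : AddSubmonoid ℕ}

lemma tp_mul {m n : ℕ} (hm : m ∈ H) (hn : n ∈ H) :
    tp k H m hm * tp k H n hn = tp k H (m + n) (H.add_mem hm hn) :=
  Subtype.ext (pow_add _ m n).symm

lemma tp_zero : tp k H 0 H.zero_mem = 1 :=
  Subtype.ext (pow_zero _)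

variable (k H) in
noncomputable def monomialIdeal (S : Set ℕ) : Ideal (ssr k H) :=
  Ideal.span {x | ∃ n : ℕ, ∃ hn : n ∈ H, n ∈ S ∧ x = tp k H n hn}

lemma span_pair_tp_eq_monomialIdeal {m n : ℕ} (hm : m ∈ H) (hn : n ∈ H) :
    Ideal.span {tp k H m hm, tp k H n hn} = monomialIdeal k H {m, n} := by
  refine congrArg Ideal.span (Set.ext fun x => ⟨?_, ?_⟩)
  · rintro (rfl | rfl)
    exacts [⟨m, hm, .inl rfl, rfl⟩, ⟨n, hn, .inr rfl, rfl⟩]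
  · rintro ⟨_, _, rfl | rfl, rfl⟩
    exacts [.inl rfl, .inr rfl]

lemma monomialIdeal_Icc_eq_span (c ℓ : ℕ) :
    monomialIdeal k H (Set.Icc c (c + ℓ)) =
      Ideal.span {x | ∃ i ≤ ℓ, ∃ hn : c + i ∈ H, x = tp k H (c + i) hn} := by
  refine congrArg Ideal.span (Set.ext fun x => ⟨?_, ?_⟩)
  · rintro ⟨n, hn, ⟨hcn, hnℓ⟩, rfl⟩
    obtain ⟨i, rfl⟩ := exists_add_of_le hcn
    exact ⟨i, by omega, hn, rfl⟩
  · rintro ⟨i, hi, hn, rfl⟩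
    exact ⟨c + i, hn, ⟨le_add_right le_rfl, by omega⟩, rfl⟩

lemma tp_mem_monomialIdeal {S : Set ℕ} {d m n : ℕ} (hd : d ∈ H) (hm : m ∈ H) (hmS : m ∈ S)
    (hn : n ∈ H) (h : n = d + m) : tp k H n hn ∈ monomialIdeal k H S := by
  subst h
  rw [← tp_mul hd hm]
  exact Ideal.mul_mem_left _ _ (Ideal.subset_span ⟨m, hm, hmS, rfl⟩)

lemma monomialIdeal_le {S T : Set ℕ}
    (h : ∀ n ∈ S, n ∈ H → ∃ m ∈ T, m ∈ H ∧ ∃ d ∈ H, n = d + m) :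
    monomialIdeal k H S ≤ monomialIdeal k H T := by
  refine Ideal.span_le.2 ?_
  rintro _ ⟨n, hn, hnS, rfl⟩
  obtain ⟨m, hmT, hm, d, hd, rfl⟩ := h n hnS hn
  exact tp_mem_monomialIdeal hd hm hmT hn rfl

lemma monomialIdeal_mono {S T : Set ℕ} (h : S ⊆ T) :
    monomialIdeal k H S ≤ monomialIdeal k H T :=
  Ideal.span_mono fun _ ⟨n, hn, hnS, hx⟩ => ⟨n, hn, h hnS, hx⟩

lemma monomialIdeal_zero : monomialIdeal k H 0 = ⊤ :=
  (Ideal.eq_top_iff_one _).2 (Ideal.subset_span ⟨0, H.zero_mem, rfl, tp_zero.symm⟩)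

lemma monomialIdeal_mul {S T : Set ℕ} (hS : S ⊆ H) (hT : T ⊆ H) :
    monomialIdeal k H S * monomialIdeal k H T = monomialIdeal k H (S + T) := by
  rw [monomialIdeal, monomialIdeal, Ideal.span_mul_span']
  refine congrArg Ideal.span (Set.ext fun x => ⟨?_, ?_⟩)
  · rintro ⟨_, ⟨m, hm, hmS, rfl⟩, _, ⟨n, hn, hnT, rfl⟩, rfl⟩
    exact ⟨m + n, H.add_mem hm hn, Set.add_mem_add hmS hnT, tp_mul hm hn⟩
  · rintro ⟨_, _, ⟨m, hmS, n, hnT, rfl⟩, rfl⟩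
    exact ⟨_, ⟨m, hS hmS, hmS, rfl⟩, _, ⟨n, hT hnT, hnT, rfl⟩, tp_mul _ _⟩

lemma monomialIdeal_pow {S : Set ℕ} (hS : S ⊆ H) (ℓ : ℕ) :
    monomialIdeal k H S ^ ℓ = monomialIdeal k H (ℓ • S) := by
  induction ℓ with
  | zero => rw [pow_zero, zero_nsmul, monomialIdeal_zero, Ideal.one_eq_top]
  | succ ℓ ih =>
    rw [pow_succ, ih, succ_nsmul, monomialIdeal_mul (AddSubmonoid.nsmul_subset hS) hS]

end MonomialIdeal

lemma mem_closure_pair_succ_iff {a n : ℕ} :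
    n ∈ AddSubmonoid.closure {a, a + 1} ↔ ∃ q r, r ≤ q ∧ n = a * q + r := by
  rw [AddSubmonoid.mem_closure_pair]
  constructor
  · rintro ⟨u, v, rfl⟩
    exact ⟨u + v, v, le_add_self, by simp only [smul_eq_mul]; ring⟩
  · rintro ⟨q, r, hrq, rfl⟩
    obtain ⟨e, rfl⟩ := exists_add_of_le hrq
    exact ⟨e, r, by simp only [smul_eq_mul]; ring⟩

lemma nsmul_pair_succ (a ℓ : ℕ) : ℓ • ({a, a + 1} : Set ℕ) = Set.Icc (a * ℓ) (a * ℓ + ℓ) := by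
  induction ℓ with
  | zero => rw [zero_nsmul, mul_zero, add_zero, Set.Icc_self, Set.singleton_zero]
  | succ ℓ ih =>
    rw [succ_nsmul, ih, mul_add_one]
    ext n
    simp only [Set.mem_add, Set.mem_Icc, Set.mem_insert_iff, Set.mem_singleton_iff]
    constructor
    · rintro ⟨m, ⟨hm₁, hm₂⟩, _, rfl | rfl, rfl⟩ <;> omega
    · rintro ⟨hn₁, hn₂⟩
      by_cases hn : n ≤ a * ℓ + a + ℓ
      · exact ⟨n - a, by omega, a, .inl rfl, by omega⟩
      · exact ⟨n - (a + 1), by omega, a + 1, .inr rfl, by omega⟩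

lemma exists_mem_Icc_add_of_mul_le {a ℓ n : ℕ} (hn : n ∈ AddSubmonoid.closure {a, a + 1})
    (h : a * ℓ ≤ n) :
    ∃ m ∈ Set.Icc (a * ℓ) (a * ℓ + ℓ), ∃ d ∈ AddSubmonoid.closure {a, a + 1}, n = d + m := by
  obtain ⟨q, r, hrq, rfl⟩ := mem_closure_pair_succ_iff.1 hn
  rcases le_or_gt ℓ q with hℓq | hqℓ
  · obtain ⟨e, rfl⟩ := exists_add_of_le hℓq
    rw [mul_add] at h ⊢
    rcases le_total r ℓ with hrℓ | hℓr
    · exact ⟨a * ℓ + r, ⟨by omega, by omega⟩, a * e,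
        mem_closure_pair_succ_iff.2 ⟨e, 0, Nat.zero_le _, rfl⟩, by omega⟩
    · exact ⟨a * ℓ + ℓ, ⟨by omega, le_rfl⟩, a * e + (r - ℓ),
        mem_closure_pair_succ_iff.2 ⟨e, r - ℓ, by omega, rfl⟩, by omega⟩
  · have : a * q ≤ a * ℓ := Nat.mul_le_mul_left a hqℓ.le
    exact ⟨a * q + r, ⟨h, by omega⟩, 0, zero_mem _, (zero_add _).symm⟩

theorem stmt3_general (k : Type) [Field k] (a : ℕ)
    (H : AddSubmonoid ℕ) (hH : H = AddSubmonoid.closure {a, a + 1})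
    (haH : a ∈ H) (ha1H : a + 1 ∈ H) (ℓ : ℕ) :
    Ideal.span {tp k H a haH, tp k H (a + 1) ha1H} ^ ℓ =
        Ideal.span {x : ssr k H | ∃ i ≤ ℓ, ∃ hn : a * ℓ + i ∈ H, x = tp k H (a * ℓ + i) hn} ∧
    Ideal.span {tp k H a haH, tp k H (a + 1) ha1H} ^ ℓ =
        Ideal.span {x : ssr k H | ∃ n : ℕ, ∃ hn : n ∈ H, a * ℓ ≤ n ∧ x = tp k H n hn} := by
  subst hH
  have hpair : {a, a + 1} ⊆ (AddSubmonoid.closure {a, a + 1} : Set ℕ) :=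
    Set.insert_subset_iff.2 ⟨haH, Set.singleton_subset_iff.2 ha1H⟩
  have hpow : Ideal.span {tp k _ a haH, tp k _ (a + 1) ha1H} ^ ℓ =
      monomialIdeal k _ (Set.Icc (a * ℓ) (a * ℓ + ℓ)) := by
    rw [span_pair_tp_eq_monomialIdeal, monomialIdeal_pow hpair, nsmul_pair_succ]
  have hIcc : Set.Icc (a * ℓ) (a * ℓ + ℓ) ⊆ AddSubmonoid.closure {a, a + 1} :=
    nsmul_pair_succ a ℓ ▸ AddSubmonoid.nsmul_subset hpair
  have hIci : monomialIdeal k _ (Set.Icc (a * ℓ) (a * ℓ + ℓ)) =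
      monomialIdeal k _ (Set.Ici (a * ℓ)) :=
    le_antisymm (monomialIdeal_mono Set.Icc_subset_Ici_self) <| monomialIdeal_le fun n hnℓ hn => by
      obtain ⟨m, hm, d, hd, rfl⟩ := exists_mem_Icc_add_of_mul_le hn hnℓ
      exact ⟨m, hm, hIcc hm, d, hd, rfl⟩
  exact ⟨hpow.trans (monomialIdeal_Icc_eq_span _ _), hpow.trans hIci⟩

/-- Lemma 3.1 (2): `𝔪^ℓ = (t^{aℓ+i} : 0 ≤ i ≤ ℓ) = (t^n : n ∈ H, n ≥ aℓ)` in `k[[t^a, t^{a+1}]]`. -/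
theorem stmt3 (k : Type) [Field k] (a : ℕ) (ha : 2 ≤ a)
    (H : AddSubmonoid ℕ) (hH : H = AddSubmonoid.closure {a, a + 1})
    (haH : a ∈ H) (ha1H : a + 1 ∈ H) (ℓ : ℕ) :
    Ideal.span {tp k H a haH, tp k H (a + 1) ha1H} ^ ℓ =
        Ideal.span {x : ssr k H | ∃ i ≤ ℓ, ∃ hn : a * ℓ + i ∈ H, x = tp k H (a * ℓ + i) hn} ∧
    Ideal.span {tp k H a haH, tp k H (a + 1) ha1H} ^ ℓ =
        Ideal.span {x : ssr k H | ∃ n : ℕ, ∃ hn : n ∈ H, a * ℓ ≤ n ∧ x = tp k H n hn} :=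
  stmt3_general k a H hH haH ha1H ℓ
end

section
/- Let H = ⟨a, a+1⟩ with a ≥ 2 and let q be a positive integer. Then the following two conditions hold if and only if q < a: (C1) for every integer n ≥ a(a−1), t^n ∈ 𝔪^q (equivalently, every n ∈ H with n ≥ c(H) = a(a−1) is a sum of q positive elements of H); (C2) every n ∈ H that is not a sum of q−1 positive elements of H satisfies n < a(q−1). -/
/-- The numerical semigroup `H = ⟨a, a+1⟩`. -/
def Hab (a : ℕ) : Set ℕ := {m | ∃ x y : ℕ, m = x * a + y * (a + 1)}

/-- Semigroup-theoretic translation of `t^n ∈ 𝔪^q` in `k[[t^a, t^{a+1}]]`: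
`n` is a sum of an element of `H` and `q` positive elements of `H`. -/
def MPow (a q n : ℕ) : Prop :=
  ∃ h ∈ Hab a, ∃ f : Fin q → ℕ, (∀ i, f i ∈ Hab a ∧ 0 < f i) ∧ n = h + ∑ i, f i

lemma hab_add {a m n : ℕ} (hm : m ∈ Hab a) (hn : n ∈ Hab a) : m + n ∈ Hab a := by
  obtain ⟨x1, y1, rfl⟩ := hm
  obtain ⟨x2, y2, rfl⟩ := hn
  exact ⟨x1 + x2, y1 + y2, by ring⟩

lemma hab_zero (a : ℕ) : 0 ∈ Hab a := ⟨0, 0, by ring⟩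

lemma hab_iff {a : ℕ} (ha : 0 < a) (n : ℕ) : n ∈ Hab a ↔ n % a ≤ n / a := by
  constructor
  · rintro ⟨x, y, rfl⟩
    obtain ⟨c, r, hrlt, rfl⟩ : ∃ c r, r < a ∧ y = a * c + r :=
      ⟨y / a, y % a, Nat.mod_lt _ ha, (Nat.div_add_mod y a).symm⟩
    have hfact : x * a + (a * c + r) * (a + 1) = a * (x + a * c + c + r) + r := by ring
    rw [hfact, Nat.mul_add_mod, Nat.mul_add_div ha, Nat.mod_eq_of_lt hrlt,
      Nat.div_eq_of_lt hrlt]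
    omega
  · intro h
    obtain ⟨k, r, hn2, hrk⟩ : ∃ k r, a * k + r = n ∧ r ≤ k :=
      ⟨n / a, n % a, Nat.div_add_mod n a, h⟩
    obtain ⟨d, hd⟩ := Nat.exists_eq_add_of_le hrk
    exact ⟨d, r, by rw [← hn2, hd]; ring⟩

lemma sum_ite_range (q s : ℕ) (h : s ≤ q) :
    ∑ i ∈ Finset.range q, (if i < s then 1 else 0) = s := by
  induction q with
  | zero => simp only [Finset.range_zero, Finset.sum_empty]; omega
  | succ q ih =>
    rw [Finset.sum_range_succ]
    by_cases hs : s ≤ q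
    · rw [ih hs, if_neg (by omega)]
      omega
    · have hsq : s = q + 1 := by omega
      have hone : ∀ i ∈ Finset.range q, (if i < s then 1 else 0) = 1 := by
        intro i hi
        rw [if_pos]
        have := Finset.mem_range.mp hi
        omega
      rw [Finset.sum_congr rfl hone, if_pos (by omega)]
      simp [hsq]

lemma mpow_iff (a q n : ℕ) (ha : 2 ≤ a) :
    MPow a q n ↔ n % a ≤ n / a ∧ q ≤ n / a := by
  have ha0 : 0 < a := by omega
  constructor
  · rintro ⟨h, hh, f, hf, rfl⟩
    have hsum : (∑ i, f i) ∈ Hab a := by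
      refine Finset.sum_induction f (· ∈ Hab a) (fun x y hx hy => hab_add hx hy)
        (hab_zero a) (fun i _ => (hf i).1)
    have hmem : h + ∑ i, f i ∈ Hab a := hab_add hh hsum
    refine ⟨(hab_iff ha0 _).mp hmem, ?_⟩
    have hge : ∀ i, a ≤ f i := by
      intro i
      obtain ⟨⟨x, y, hxy⟩, hpos⟩ := hf i
      rcases Nat.eq_zero_or_pos (x + y) with h0 | h1
      · obtain ⟨hx, hy⟩ : x = 0 ∧ y = 0 := by omega
        subst hx hy
        simp at hxy
        omega
      · have hc1 : (x + y) * a ≤ x * a + y * (a + 1) := by nlinarith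
        have hc2 : a ≤ (x + y) * a := by nlinarith
        omega
    have hqa : q * a ≤ ∑ i, f i := by
      calc q * a = ∑ _i : Fin q, a := by simp [Finset.sum_const, Nat.mul_comm]
        _ ≤ ∑ i, f i := Finset.sum_le_sum fun i _ => hge i
    rw [Nat.le_div_iff_mul_le ha0]
    omega
  · rintro ⟨h1, h2⟩
    set r := n % a with hr
    set k := n / a with hk
    have hn : n = a * k + r := (Nat.div_add_mod n a).symm
    set s := min r q with hs
    refine ⟨(k - r - (q - s)) * a + (r - s) * (a + 1), ⟨_, _, rfl⟩,
      fun i => a + (if (i : ℕ) < s then 1 else 0), fun i => ?_, ?_⟩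
    · dsimp only
      by_cases hi : (i : ℕ) < s
      · rw [if_pos hi]
        exact ⟨⟨0, 1, by ring⟩, by omega⟩
      · rw [if_neg hi]
        exact ⟨⟨1, 0, by ring⟩, by omega⟩
    · have hsum : ∑ i : Fin q, (a + (if (i : ℕ) < s then 1 else 0)) = q * a + s := by
        rw [Finset.sum_add_distrib]
        simp only [Finset.sum_const, Finset.card_univ, Fintype.card_fin, smul_eq_mul,
          Nat.mul_one]
        rw [Fin.sum_univ_eq_sum_range (fun j => if j < s then 1 else 0) q,
          sum_ite_range q s (by omega)]
      rw [hsum]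
      rcases le_or_gt r q with hrq | hrq
      · have hss : s = r := by omega
        obtain ⟨d, hd⟩ := Nat.exists_eq_add_of_le h2
        rw [hss]
        have e1 : k - r - (q - r) = d := by omega
        have e2 : r - r = 0 := by omega
        rw [e1, e2, hn, hd]; ring
      · have hss : s = q := by omega
        obtain ⟨d1, hd1⟩ := Nat.exists_eq_add_of_le h1
        obtain ⟨d2, hd2⟩ := Nat.exists_eq_add_of_le (le_of_lt hrq)
        rw [hss]
        have e1 : k - r - (q - q) = d1 := by omega
        have e3 : r - q = d2 := by omega
        rw [e1, e3, hn, hd1, hd2]; ring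

/-- Proposition 3.2: conditions (C1) and (C2) hold for `q` iff `q < a`. -/
theorem stmt4 (a q : ℕ) (ha : 2 ≤ a) (hq : 0 < q) :
    ((∀ n : ℕ, a * (a - 1) ≤ n → MPow a q n) ∧
      (∀ n ∈ Hab a, ¬ MPow a (q - 1) n → n < a * (q - 1))) ↔ q < a := by
  have ha0 : 0 < a := by omega
  constructor
  · rintro ⟨h1, _⟩
    have h := h1 (a * (a - 1)) le_rfl
    rw [mpow_iff a q _ ha] at h
    have hdiv : a * (a - 1) / a = a - 1 := Nat.mul_div_cancel_left _ ha0
    omega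
  · intro hqa
    constructor
    · intro n hn
      rw [mpow_iff a q n ha]
      have hd : a - 1 ≤ n / a := by
        rw [Nat.le_div_iff_mul_le ha0]
        calc (a - 1) * a = a * (a - 1) := by ring
          _ ≤ n := hn
      have hm : n % a < a := Nat.mod_lt _ ha0
      omega
    · intro n hn hnm
      rw [mpow_iff a (q - 1) n ha] at hnm
      rw [hab_iff ha0] at hn
      have h3 : n / a + 1 ≤ q - 1 := by omega
      have h4 : a * (n / a + 1) ≤ a * (q - 1) := Nat.mul_le_mul_left a h3
      have h5 : n = a * (n / a) + n % a := (Nat.div_add_mod n a).symm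
      have h6 : a * (n / a + 1) = a * (n / a) + a := by ring
      have hm : n % a < a := Nat.mod_lt _ ha0
      omega
end

section
/- Let H be a symmetric numerical semigroup with multiplicity a and conductor c, A = k[[H]], 𝔪 its maximal ideal, q > 0 an integer satisfying: (C1) t^n ∈ 𝔪^q for all integers n ≥ c, and (C2) every n ∈ H with t^n ∉ 𝔪^{q−1} satisfies n < a(q−1). Let 0 < s ∈ H, Q = (t^s), I = Q : 𝔪^q. Then 𝔪^q I = 𝔪^q Q and Q ∩ I² = QI. -/
/-!
Membership in the ideals involved is decided by exponents. An element of `k[[H]]` lies in an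
ideal containing the monomials `t^n`, `n ∈ S`, as soon as its support lies in `S` and `S`
contains all large integers. The exponents of `𝔪^q` form `V`, those of `Q = (t^s)` form `s + H`,
and those of `I = Q : 𝔪^q` form `F = {n ∈ H | n + V ⊆ s + H}`. Both equalities then follow from
`F + V ⊆ s + V`: it puts the exponents of `𝔪^q I` in `s + V`, and if `s + h = f + f'` with
`f, f' ∈ F` then `h ∈ F`. For the inclusion, let `f + v = s + n` with `n ∉ V`; by (C1), (C2) and
symmetry `c - 1 - n + v ∈ V`, so `f + (c - 1 - n + v) = s + (c - 1)` puts the gap `c - 1` in `H`.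
-/

set_option maxHeartbeats 1000000
set_option synthInstance.maxHeartbeats 1000000

open PowerSeries

open scoped Pointwise

section CoeffSupport

variable {R : Type*} [Semiring R]

def coeffSupport (f : R⟦X⟧) : Set ℕ := {n | coeff n f ≠ 0}

@[simp]
lemma mem_coeffSupport {f : R⟦X⟧} {n : ℕ} : n ∈ coeffSupport f ↔ coeff n f ≠ 0 := Iff.rfl

lemma coeffSupport_add_subset (f g : R⟦X⟧) :
    coeffSupport (f + g) ⊆ coeffSupport f ∪ coeffSupport g := by
  intro n hn
  by_contra h
  simp_all

lemma coeffSupport_mul_subset (f g : R⟦X⟧) :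
    coeffSupport (f * g) ⊆ coeffSupport f + coeffSupport g := by
  intro n hn
  rw [mem_coeffSupport, coeff_mul] at hn
  obtain ⟨⟨i, j⟩, hij, hne⟩ := Finset.exists_ne_zero_of_sum_ne_zero hn
  exact ⟨i, left_ne_zero_of_mul hne, j, right_ne_zero_of_mul hne,
    Finset.HasAntidiagonal.mem_antidiagonal.mp hij⟩

lemma coeffSupport_X_pow_mul (m : ℕ) (f : R⟦X⟧) :
    coeffSupport (X ^ m * f) = m +ᵥ coeffSupport f := by
  ext n
  simp only [mem_coeffSupport, coeff_X_pow_mul', Set.mem_vadd_set, vadd_eq_add]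
  constructor
  · intro hn
    have hmn : m ≤ n := by by_contra h; simp [h] at hn
    exact ⟨n - m, by simpa [hmn] using hn, by omega⟩
  · rintro ⟨i, hi, rfl⟩
    simpa using hi

end CoeffSupport

section SemigroupRing

variable {k : Type} [Field k] {H : AddSubmonoid ℕ}

lemma coeffSupport_subset (x : ssr k H) : coeffSupport (x : k⟦X⟧) ⊆ H :=
  fun n hn => by_contra fun h => hn (x.2 n h)

@[simp]
lemma coe_tp (n : ℕ) (hn : n ∈ H) : (tp k H n hn : k⟦X⟧) = X ^ n := rfl

lemma tp_add (m n : ℕ) (hm : m ∈ H) (hn : n ∈ H) :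
    tp k H (m + n) (H.add_mem hm hn) = tp k H m hm * tp k H n hn :=
  Subtype.ext (pow_add X m n)

lemma coeffSupport_tp (n : ℕ) (hn : n ∈ H) : coeffSupport (tp k H n hn : k⟦X⟧) = {n} := by
  ext m
  simp [coeff_X_pow]

lemma coeffSupport_subset_of_mem_mIdeal {x : ssr k H} (hx : x ∈ mIdeal k H) :
    coeffSupport (x : k⟦X⟧) ⊆ (H : Set ℕ) \ {0} := by
  have hker : mIdeal k H ≤ RingHom.ker (constantCoeff.comp (ssr k H).val.toRingHom) := by
    refine Ideal.span_le.mpr ?_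
    rintro _ ⟨n, hn, hn0, rfl⟩
    simp [hn0.ne']
  intro n hn
  refine ⟨coeffSupport_subset x hn, fun h0 => hn ?_⟩
  rw [Set.mem_singleton_iff.mp h0, coeff_zero_eq_constantCoeff_apply]
  exact hker hx

def SupportedIn (J : Ideal (ssr k H)) (S : Set ℕ) : Prop :=
  ∀ x ∈ J, coeffSupport (x : k⟦X⟧) ⊆ S

lemma SupportedIn.mul {J K : Ideal (ssr k H)} {S T : Set ℕ} (hJ : SupportedIn J S)
    (hK : SupportedIn K T) : SupportedIn (J * K) (S + T) := by
  intro z hz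
  refine Submodule.mul_induction_on hz (fun x hx y hy => ?_) (fun x y hx hy => ?_)
  · exact (coeffSupport_mul_subset _ _).trans (Set.add_subset_add (hJ x hx) (hK y hy))
  · exact (coeffSupport_add_subset _ _).trans (Set.union_subset hx hy)

end SemigroupRing

/-- The exponents of the monomials in `𝔪 ^ j`. -/
def mValues (H : AddSubmonoid ℕ) : ℕ → Set ℕ
  | 0 => H
  | j + 1 => mValues H j + ((H : Set ℕ) \ {0})

section MValues

variable {H : AddSubmonoid ℕ}

lemma mValues_subset : ∀ j, mValues H j ⊆ H
  | 0 => subset_rfl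
  | j + 1 => by
    rintro _ ⟨w, hw, p, hp, rfl⟩
    exact H.add_mem (mValues_subset j hw) hp.1

lemma mul_le_of_mem_mValues {a : ℕ} (hamin : ∀ n ∈ H, n ≠ 0 → a ≤ n) :
    ∀ {j n}, n ∈ mValues H j → a * j ≤ n
  | 0, _, _ => by simp
  | j + 1, _, h => by
    obtain ⟨w, hw, p, hp, rfl⟩ := h
    have hw_ge := mul_le_of_mem_mValues hamin hw
    have hp_ge := hamin p hp.1 hp.2
    show a * (j + 1) ≤ w + p
    rw [mul_add_one]
    omega

variable {k : Type} [Field k]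

lemma supportedIn_mIdeal_pow : ∀ j, SupportedIn (mIdeal k H ^ j) (mValues H j)
  | 0 => by
    rw [pow_zero]
    exact fun x _ => coeffSupport_subset x
  | j + 1 => by
    rw [pow_succ]
    exact (supportedIn_mIdeal_pow j).mul fun x hx => coeffSupport_subset_of_mem_mIdeal hx

lemma tp_mem_mIdeal_pow_iff {j n : ℕ} (hn : n ∈ H) :
    tp k H n hn ∈ mIdeal k H ^ j ↔ n ∈ mValues H j := by
  refine ⟨fun h => supportedIn_mIdeal_pow j _ h (by simp), fun h => ?_⟩
  induction j generalizing n with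
  | zero => simp
  | succ j ih =>
    obtain ⟨w, hw, p, hp, rfl⟩ := h
    rw [pow_succ, tp_add w p (mValues_subset j hw) hp.1]
    exact Ideal.mul_mem_mul (ih _ hw) (Ideal.subset_span ⟨p, hp.1, Nat.pos_of_ne_zero hp.2, rfl⟩)

end MValues

section MonomialCriterion

variable {k : Type} [Field k] {H : AddSubmonoid ℕ}

lemma exists_mem_coeff_eq_trunc {J : Ideal (ssr k H)} {S : Set ℕ}
    (hSJ : ∀ n (hn : n ∈ H), n ∈ S → tp k H n hn ∈ J) {x : ssr k H}
    (hx : coeffSupport (x : k⟦X⟧) ⊆ S) :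
    ∀ m, ∃ y ∈ J, ∀ n, coeff n (y : k⟦X⟧) = if n < m then coeff n (x : k⟦X⟧) else 0
  | 0 => ⟨0, J.zero_mem, fun n => by simp⟩
  | m + 1 => by
    obtain ⟨y, hyJ, hy⟩ := exists_mem_coeff_eq_trunc hSJ hx m
    by_cases hm : coeff m (x : k⟦X⟧) = 0
    · refine ⟨y, hyJ, fun n => ?_⟩
      rw [hy n]
      rcases lt_trichotomy n m with h | rfl | h
      · simp [h, Nat.lt_succ_of_lt h]
      · simp [hm]
      · simp [h.not_gt, (Nat.succ_le_of_lt h).not_gt]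
    · have hmH : m ∈ H := coeffSupport_subset x hm
      refine ⟨y + coeff m (x : k⟦X⟧) • tp k H m hmH,
        J.add_mem hyJ (Submodule.smul_of_tower_mem J _ (hSJ m hmH (hx hm))), fun n => ?_⟩
      rw [Subalgebra.coe_add, Subalgebra.coe_smul, coe_tp, map_add, map_smul, hy n, coeff_X_pow]
      rcases lt_trichotomy n m with h | rfl | h
      · simp [h, h.ne, Nat.lt_succ_of_lt h]
      · simp
      · simp [h.not_gt, h.ne', (Nat.succ_le_of_lt h).not_gt]

lemma exists_eq_tp_mul_of_coeff_eq_zero {c : ℕ} (hc : ∀ n, c ≤ n → n ∈ H) {M : ℕ} (hM : M ∈ H)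
    {x : ssr k H} (hx : ∀ n < M + c, coeff n (x : k⟦X⟧) = 0) : ∃ z, x = tp k H M hM * z := by
  obtain ⟨z, hz⟩ := X_pow_dvd_iff.mpr fun n (hn : n < M) => hx n (by omega)
  refine ⟨⟨z, fun n hn => ?_⟩, Subtype.ext hz⟩
  have hnc : n < c := by by_contra h; exact hn (hc n (by omega))
  rw [← coeff_X_pow_mul z M n, ← hz]
  exact hx _ (by omega)

/-- Subtracting finitely many monomials leaves a series vanishing below `N + 2c`, which is
`t^(N + c)` times an element of `k[[H]]`. -/
theorem mem_of_coeffSupport_subset {c : ℕ} (hc : ∀ n, c ≤ n → n ∈ H) {J : Ideal (ssr k H)}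
    {S : Set ℕ} {N : ℕ} (hSN : ∀ n, N ≤ n → n ∈ S)
    (hSJ : ∀ n (hn : n ∈ H), n ∈ S → tp k H n hn ∈ J) {x : ssr k H}
    (hx : coeffSupport (x : k⟦X⟧) ⊆ S) : x ∈ J := by
  have hM : N + c ∈ H := hc _ (Nat.le_add_left c N)
  obtain ⟨y, hyJ, hy⟩ := exists_mem_coeff_eq_trunc hSJ hx (N + c + c)
  obtain ⟨z, hz⟩ := exists_eq_tp_mul_of_coeff_eq_zero hc hM (x := x - y) fun n hn => by
    rw [Subalgebra.coe_sub, map_sub, hy n, if_pos hn, sub_self]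
  have hxy : x - y ∈ J := hz ▸ J.mul_mem_right z (hSJ _ hM (hSN _ (Nat.le_add_right N c)))
  simpa using J.add_mem hxy hyJ

end MonomialCriterion

/-- The exponents of the monomials in `(t^s) : 𝔪 ^ q`. -/
def colonValues (H : AddSubmonoid ℕ) (s q : ℕ) : Set ℕ :=
  {n | n ∈ H ∧ n +ᵥ mValues H q ⊆ s +ᵥ (H : Set ℕ)}

section ParameterIdeal

variable {H : AddSubmonoid ℕ} {s q : ℕ}

lemma colonValues_add_mValues_subset : colonValues H s q + mValues H q ⊆ s +ᵥ (H : Set ℕ) := by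
  rintro _ ⟨n, hn, v, hv, rfl⟩
  exact hn.2 ⟨v, hv, rfl⟩

lemma vadd_subset_colonValues (hs : s ∈ H) : s +ᵥ (H : Set ℕ) ⊆ colonValues H s q := by
  rintro _ ⟨h, hh, rfl⟩
  refine ⟨H.add_mem hs hh, ?_⟩
  rintro _ ⟨v, hv, rfl⟩
  exact ⟨h + v, H.add_mem hh (mValues_subset q hv), by simp [add_assoc]⟩

variable {k : Type} [Field k]

lemma supportedIn_span_tp (hs : s ∈ H) :
    SupportedIn (Ideal.span {tp k H s hs}) (s +ᵥ (H : Set ℕ)) := by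
  intro x hx
  obtain ⟨y, rfl⟩ := Ideal.mem_span_singleton.mp hx
  rw [Subalgebra.coe_mul, coe_tp, coeffSupport_X_pow_mul]
  exact Set.vadd_set_mono (coeffSupport_subset y)

lemma mem_span_tp_iff {c : ℕ} (hc : ∀ n, c ≤ n → n ∈ H) (hs : s ∈ H) {x : ssr k H} :
    x ∈ Ideal.span {tp k H s hs} ↔ coeffSupport (x : k⟦X⟧) ⊆ s +ᵥ (H : Set ℕ) := by
  refine ⟨supportedIn_span_tp hs x, mem_of_coeffSupport_subset hc (N := s + c) ?_ ?_⟩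
  · intro n hn
    exact ⟨n - s, hc _ (by omega), by simp only [vadd_eq_add]; omega⟩
  · rintro _ hn ⟨h, hh, rfl⟩
    show tp k H (s + h) hn ∈ _
    rw [tp_add s h hs hh]
    exact Ideal.mul_mem_right _ _ (Ideal.mem_span_singleton_self _)

lemma mem_colon_iff {c : ℕ} (hc : ∀ n, c ≤ n → n ∈ H) (hs : s ∈ H) {x : ssr k H} :
    x ∈ (Ideal.span {tp k H s hs}).colon ((mIdeal k H ^ q : Ideal (ssr k H)) : Set (ssr k H)) ↔
      coeffSupport (x : k⟦X⟧) ⊆ colonValues H s q := by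
  rw [Submodule.mem_colon]
  constructor
  · intro hx n hn
    refine ⟨coeffSupport_subset x hn, ?_⟩
    rintro _ ⟨v, hv, rfl⟩
    have hvH := mValues_subset q hv
    have hxv := hx _ ((tp_mem_mIdeal_pow_iff hvH).mpr hv)
    rw [smul_eq_mul, mul_comm] at hxv
    refine supportedIn_span_tp hs _ hxv ?_
    rw [Subalgebra.coe_mul, coe_tp, coeffSupport_X_pow_mul]
    show n + v ∈ _
    exact add_comm v n ▸ Set.vadd_mem_vadd_set hn
  · intro hx p hp
    rw [smul_eq_mul, mem_span_tp_iff hc hs]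
    exact (coeffSupport_mul_subset _ _).trans <| (Set.add_subset_add hx
      (supportedIn_mIdeal_pow q p hp)).trans colonValues_add_mValues_subset

lemma supportedIn_colon {c : ℕ} (hc : ∀ n, c ≤ n → n ∈ H) (hs : s ∈ H) :
    SupportedIn ((Ideal.span {tp k H s hs}).colon
      ((mIdeal k H ^ q : Ideal (ssr k H)) : Set (ssr k H))) (colonValues H s q) :=
  fun _ hx => (mem_colon_iff hc hs).mp hx

end ParameterIdeal

section Symmetric

variable {H : AddSubmonoid ℕ} {a c q s : ℕ}

lemma sub_one_notMem_of_symm (hsym : ∀ n, n ≤ c - 1 → (n ∈ H ↔ c - 1 - n ∉ H)) : c - 1 ∉ H := by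
  simpa using (hsym 0 (Nat.zero_le _)).mp H.zero_mem

lemma sub_add_mem_mValues (hamin : ∀ n ∈ H, n ≠ 0 → a ≤ n)
    (hsym : ∀ n, n ≤ c - 1 → (n ∈ H ↔ c - 1 - n ∉ H))
    (hC1 : ∀ n, c ≤ n → n ∈ mValues H (q + 1)) (hC2 : ∀ n ∈ H, n ∉ mValues H q → n < a * q)
    {n v : ℕ} (hnV : n ∉ mValues H (q + 1)) (hv : v ∈ mValues H (q + 1)) :
    c - 1 - n + v ∈ mValues H (q + 1) := by
  have hnc : n < c := by by_contra h; exact hnV (hC1 n (by omega))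
  obtain ⟨w, hw, p, ⟨hpH, hp0 : p ≠ 0⟩, rfl⟩ := hv
  show c - 1 - n + (w + p) ∈ _
  by_cases hmp : c - 1 - n + p ∈ H
  · refine ⟨w, hw, c - 1 - n + p, ⟨hmp, by simp only [Set.mem_singleton_iff]; omega⟩, ?_⟩
    show w + _ = _
    omega
  · have hle : c - 1 - n + p ≤ c - 1 := by
      by_contra h
      exact hmp (mValues_subset _ (hC1 _ (by omega)))
    have hr : n - p ∈ H := by
      have := (hsym _ hle).not.mp hmp
      rwa [not_not, show c - 1 - (c - 1 - n + p) = n - p by omega] at this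
    have hrV : n - p ∉ mValues H q :=
      fun h => hnV ⟨n - p, h, p, ⟨hpH, hp0⟩, by show _ + _ = _; omega⟩
    have hr_lt : n - p < a * q := hC2 _ hr hrV
    have hw_ge : a * q ≤ w := mul_le_of_mem_mValues hamin hw
    exact hC1 _ (by omega)

lemma colonValues_add_mValues_subset_vadd_mValues (hamin : ∀ n ∈ H, n ≠ 0 → a ≤ n)
    (hsym : ∀ n, n ≤ c - 1 → (n ∈ H ↔ c - 1 - n ∉ H))
    (hC1 : ∀ n, c ≤ n → n ∈ mValues H (q + 1)) (hC2 : ∀ n ∈ H, n ∉ mValues H q → n < a * q) :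
    colonValues H s (q + 1) + mValues H (q + 1) ⊆ s +ᵥ mValues H (q + 1) := by
  rintro _ ⟨f, hf, v, hv, rfl⟩
  obtain ⟨n, -, hfv⟩ := hf.2 ⟨v, hv, rfl⟩
  by_cases hnV : n ∈ mValues H (q + 1)
  · exact ⟨n, hnV, hfv⟩
  · obtain ⟨h, hh, hfv'⟩ := hf.2 ⟨_, sub_add_mem_mValues hamin hsym hC1 hC2 hnV hv, rfl⟩
    have hnc : n < c := by by_contra h; exact hnV (hC1 n (by omega))
    simp only [vadd_eq_add] at hfv hfv'
    have : h = c - 1 := by omega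
    exact absurd (this ▸ hh) (sub_one_notMem_of_symm hsym)

lemma vadd_inter_add_subset (hF : colonValues H s q + mValues H q ⊆ s +ᵥ mValues H q) :
    (s +ᵥ (H : Set ℕ)) ∩ (colonValues H s q + colonValues H s q) ⊆ s +ᵥ colonValues H s q := by
  rintro _ ⟨⟨h, hh, rfl⟩, f, hf, f', hf', hff'⟩
  refine ⟨h, ⟨hh, ?_⟩, rfl⟩
  rintro _ ⟨u, hu, rfl⟩
  obtain ⟨u', hu', hfu⟩ := hF ⟨f', hf', u, hu, rfl⟩
  obtain ⟨h', hh', hfu'⟩ := hf.2 ⟨u', hu', rfl⟩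
  refine ⟨h', hh', ?_⟩
  simp only [vadd_eq_add] at *
  omega

end Symmetric

section Main

variable {k : Type} [Field k] {H : AddSubmonoid ℕ} {c s q : ℕ}

lemma mIdeal_pow_mul_colon_le (hc : ∀ n, c ≤ n → n ∈ H) (hs : s ∈ H)
    (hC1 : ∀ n, c ≤ n → n ∈ mValues H q)
    (hF : colonValues H s q + mValues H q ⊆ s +ᵥ mValues H q) :
    mIdeal k H ^ q *
        (Ideal.span {tp k H s hs}).colon ((mIdeal k H ^ q : Ideal (ssr k H)) : Set (ssr k H)) ≤
      mIdeal k H ^ q * Ideal.span {tp k H s hs} := by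
  intro x hx
  refine mem_of_coeffSupport_subset hc (N := s + c) (S := s +ᵥ mValues H q) ?_ ?_ ?_
  · intro n hn
    exact ⟨n - s, hC1 _ (by omega), by simp only [vadd_eq_add]; omega⟩
  · rintro _ hn ⟨u, hu, rfl⟩
    show tp k H (s + u) hn ∈ _
    rw [tp_add s u hs (mValues_subset q hu), mul_comm (tp k H s hs)]
    exact Ideal.mul_mem_mul ((tp_mem_mIdeal_pow_iff _).mpr hu) (Ideal.mem_span_singleton_self _)
  · have hx := (supportedIn_mIdeal_pow q).mul (supportedIn_colon hc hs) x hx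
    exact hx.trans (add_comm (colonValues H s q) _ ▸ hF)

lemma inf_colon_sq_le (hc : ∀ n, c ≤ n → n ∈ H) (hs : s ∈ H)
    (hF : colonValues H s q + mValues H q ⊆ s +ᵥ mValues H q) :
    Ideal.span {tp k H s hs} ⊓
        (Ideal.span {tp k H s hs}).colon ((mIdeal k H ^ q : Ideal (ssr k H)) : Set (ssr k H)) ^ 2 ≤
      Ideal.span {tp k H s hs} *
        (Ideal.span {tp k H s hs}).colon ((mIdeal k H ^ q : Ideal (ssr k H)) : Set (ssr k H)) := by
  rintro x ⟨hxQ, hxI⟩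
  rw [sq] at hxI
  refine mem_of_coeffSupport_subset hc (N := s + s + c) (S := s +ᵥ colonValues H s q) ?_ ?_ ?_
  · intro n hn
    refine ⟨n - s, vadd_subset_colonValues hs ⟨n - s - s, hc _ (by omega), ?_⟩, ?_⟩ <;>
      simp only [vadd_eq_add] <;> omega
  · rintro _ hn ⟨f, hf, rfl⟩
    show tp k H (s + f) hn ∈ _
    rw [tp_add s f hs hf.1]
    refine Ideal.mul_mem_mul (Ideal.mem_span_singleton_self _) ((mem_colon_iff hc hs).mpr ?_)
    rw [coeffSupport_tp]
    exact Set.singleton_subset_iff.mpr hf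
  · have hxI' := (supportedIn_colon hc hs).mul (supportedIn_colon hc hs) x hxI
    exact (Set.subset_inter (supportedIn_span_tp hs x hxQ) hxI').trans (vadd_inter_add_subset hF)

end Main

theorem stmt9_general (k : Type) [Field k] (H : AddSubmonoid ℕ)
    (a : ℕ) (hamin : ∀ n ∈ H, n ≠ 0 → a ≤ n)
    (c : ℕ) (hc : ∀ n : ℕ, c ≤ n → n ∈ H)
    (hsym : ∀ n : ℕ, n ≤ c - 1 → (n ∈ H ↔ (c - 1 - n) ∉ H))
    (q : ℕ) (hq : 0 < q)
    (hC1 : ∀ n : ℕ, ∀ hn : c ≤ n, tp k H n (hc n hn) ∈ mIdeal k H ^ q)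
    (hC2 : ∀ (n : ℕ) (hn : n ∈ H), tp k H n hn ∉ mIdeal k H ^ (q - 1) → n < a * (q - 1))
    (s : ℕ) (hs : s ∈ H)
    (Q : Ideal (ssr k H)) (hQ : Q = Ideal.span {tp k H s hs})
    (I : Ideal (ssr k H)) (hI : I = Submodule.colon Q ((mIdeal k H ^ q : Ideal (ssr k H)) : Set (ssr k H))) :
    mIdeal k H ^ q * I = mIdeal k H ^ q * Q ∧ Q ⊓ I ^ 2 = Q * I := by
  obtain ⟨q, rfl⟩ : ∃ q', q = q' + 1 := ⟨q - 1, by omega⟩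
  have hV1 : ∀ n, c ≤ n → n ∈ mValues H (q + 1) :=
    fun n hn => (tp_mem_mIdeal_pow_iff _).mp (hC1 n hn)
  have hV2 : ∀ n ∈ H, n ∉ mValues H q → n < a * q :=
    fun n hn hnV => hC2 n hn (by simpa [tp_mem_mIdeal_pow_iff] using hnV)
  have hF := colonValues_add_mValues_subset_vadd_mValues (s := s) hamin hsym hV1 hV2
  have hQI : Q ≤ I := hI ▸ Ideal.le_colon
  subst hQ hI
  refine ⟨le_antisymm (mIdeal_pow_mul_colon_le hc hs hV1 hF) (Ideal.mul_mono_right hQI),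
    le_antisymm (inf_colon_sq_le hc hs hF) (le_inf Ideal.mul_le_left ?_)⟩
  rw [sq]
  exact Ideal.mul_mono_left hQI

/-- Theorem 2.1 (1): under (C1) and (C2), `𝔪^q I = 𝔪^q Q` and `Q ∩ I² = QI`. -/
theorem stmt9 (k : Type) [Field k] (H : AddSubmonoid ℕ) (hfin : (Set.univ \ (H : Set ℕ)).Finite)
    (a : ℕ) (haH : a ∈ H) (ha0 : a ≠ 0) (hamin : ∀ n ∈ H, n ≠ 0 → a ≤ n)
    (c : ℕ) (hc : ∀ n : ℕ, c ≤ n → n ∈ H) (hcmin : ∀ m : ℕ, (∀ n : ℕ, m ≤ n → n ∈ H) → c ≤ m)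
    (hsym : ∀ n : ℕ, n ≤ c - 1 → (n ∈ H ↔ (c - 1 - n) ∉ H))
    (q : ℕ) (hq : 0 < q)
    (hC1 : ∀ n : ℕ, ∀ hn : c ≤ n, tp k H n (hc n hn) ∈ mIdeal k H ^ q)
    (hC2 : ∀ (n : ℕ) (hn : n ∈ H), tp k H n hn ∉ mIdeal k H ^ (q - 1) → n < a * (q - 1))
    (s : ℕ) (hs : s ∈ H) (hs0 : 0 < s)
    (Q : Ideal (ssr k H)) (hQ : Q = Ideal.span {tp k H s hs})
    (I : Ideal (ssr k H)) (hI : I = Submodule.colon Q ((mIdeal k H ^ q : Ideal (ssr k H)) : Set (ssr k H))) :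
    mIdeal k H ^ q * I = mIdeal k H ^ q * Q ∧ Q ⊓ I ^ 2 = Q * I :=
  stmt9_general k H a hamin c hc hsym q hq hC1 hC2 s hs Q hQ I hI
end
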